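/- arXiv:1602.06169 — 3 statements merged into one kernel-verified Lean document; each statement's English description precedes it below -/
import Mathlib

section
/- In any folded realization p = fold(p') of a request r, where the PR-graph of r has longest simple source-sink path of length at most k, every physical edge or node z of N appears in p with multiplicity m_p(z) at most k. -/
/-!
Since `p'` is simple, the vertices of `p'` lying over a fixed physical node `v` have pairwise
distinct `Y`-coordinates, so `v` occurs at most `k` times in `p'`; folding only deletes
occurrences. An occurrence of a physical edge `(a, b)` in `fold p'` is determined by the
occurrence of `a` at its tail, so edge multiplicities are bounded by node multiplicities.
-/

structure PRG (V X : Type*) where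
  E : Set (X × X)
  s : X
  t : X
  UV : X → Set V
  UE : X × X → Set (V × V)

abbrev PV (V X : Type*) := V × (X × X)

def Routing {V X : Type*} (G : PRG V X) (a b : PV V X) : Prop :=
  a.2 = b.2 ∧ a.2 ∈ G.E ∧ (a.1, b.1) ∈ G.UE a.2

def Processing {V X : Type*} (G : PRG V X) (a b : PV V X) : Prop :=
  a.1 = b.1 ∧ a.2 ∈ G.E ∧ b.2 ∈ G.E ∧ a.2.2 = b.2.1 ∧ a.1 ∈ G.UV a.2.2

def ProdEdge {V X : Type*} (G : PRG V X) (a b : PV V X) : Prop :=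
  Routing G a b ∨ Processing G a b

/-- `fold`: contract processing edges and project routing edges to physical edges. -/
def fold {V X : Type*} [DecidableEq V] (p : List (PV V X)) : List V :=
  (p.map Prod.fst).destutter (· ≠ ·)

namespace List

variable {α β : Type*}

theorem map_fst_zip_sublist : ∀ (l₁ : List α) (l₂ : List β), (l₁.zip l₂).map Prod.fst <+ l₁
  | [], _ => by simp
  | _ :: _, [] => by simp
  | _ :: l₁, _ :: l₂ => by simpa using map_fst_zip_sublist l₁ l₂

theorem count_zip_le_count_left [DecidableEq α] [DecidableEq β] (l₁ : List α) (l₂ : List β)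
    (a : α) (b : β) : (l₁.zip l₂).count (a, b) ≤ l₁.count a :=
  (count_le_count_map (f := Prod.fst)).trans ((map_fst_zip_sublist l₁ l₂).count_le a)

theorem count_map_fst_le_length_dedup_map_snd [DecidableEq α] [DecidableEq β]
    {l : List (α × β)} (hl : l.Nodup) (a : α) :
    (l.map Prod.fst).count a ≤ (l.map Prod.snd).dedup.length := by
  set fiber := l.filter (·.1 == a)
  have hcount : (l.map Prod.fst).count a = (fiber.map Prod.snd).length := by
    rw [length_map, count_eq_countP, countP_map, countP_eq_length_filter]
    rfl
  have hfiber_nodup : (fiber.map Prod.snd).Nodup := by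
    refine (hl.filter _).map_on fun x hx y hy hxy => Prod.ext ?_ hxy
    simp only [fiber, mem_filter, beq_iff_eq] at hx hy
    rw [hx.2, hy.2]
  have hsub : fiber.map Prod.snd ⊆ (l.map Prod.snd).dedup := fun y hy =>
    mem_dedup.2 (map_subset _ (filter_subset_self _) hy)
  exact hcount ▸ (hfiber_nodup.subperm hsub).length_le

end List

theorem fold_multiplicity_le_general {V X : Type*} [DecidableEq V] [DecidableEq X]
    (k : ℕ) (p' : List (PV V X))
    (hnodup : p'.Nodup)
    (hk : (p'.map Prod.snd).dedup.length ≤ k) :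
    (∀ v : V, (fold p').count v ≤ k) ∧
    (∀ a b : V, (((fold p').zip (fold p').tail).count (a, b)) ≤ k) := by
  have hnode : ∀ v : V, (fold p').count v ≤ k := fun v =>
    calc (fold p').count v ≤ (p'.map Prod.fst).count v := (List.destutter_sublist _ _).count_le v
      _ ≤ (p'.map Prod.snd).dedup.length := List.count_map_fst_le_length_dedup_map_snd hnodup v
      _ ≤ k := hk
  exact ⟨hnode, fun a b => (List.count_zip_le_count_left _ _ a b).trans (hnode a)⟩

/-- In a folded realization `fold p'` of a simple path `p'` in the product network
that uses at most `k` distinct PR-edge coordinates (as is the case when every simple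
source-sink path of the PR-graph has length at most `k`), every physical node
appears at most `k` times, and every physical edge appears at most `k` times. -/
theorem fold_multiplicity_le {V X : Type*} [DecidableEq V] [DecidableEq X]
    (G : PRG V X) (k : ℕ) (p' : List (PV V X))
    (hnodup : p'.Nodup) (hchain : p'.Chain' (ProdEdge G))
    (hk : (p'.map Prod.snd).dedup.length ≤ k) :
    (∀ v : V, (fold p').count v ≤ k) ∧
    (∀ a b : V, (((fold p').zip (fold p').tail).count (a, b)) ≤ k) :=
  fold_multiplicity_le_general k p' hnodup hk
end

section
/- Suppose edge e has current load L ∈ [0,1] and exp-load x_e = (1/p_max)(2^{LΦ}−1) with Φ = log₂(3 p_max b_max + 1). If a request with demand d satisfying d/c_e ≤ 1/(3Φ) is routed through e, then the increase in exp-load satisfies x'_e − x_e ≤ (d·Φ)/(c_e) · 2^{1/3} · (x_e + 1/p_max). -/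
/-- Bound on the increase of the exp-load of an edge when routing a small demand:
if the current load is `L` and a demand `d` with `(d/c)·Φ ≤ 1/3` is routed through
the edge of capacity `c`, then
`x'_e − x_e ≤ (d/c)·Φ·2^{1/3}·(x_e + 1/p_max)`,
where `x_e = (1/p_max)(2^{LΦ} − 1)` and `x'_e = (1/p_max)(2^{(L + d/c)Φ} − 1)`. -/
theorem expLoad_increase_bound (pmax Φ L d c : ℝ)
    (hp : 1 ≤ pmax) (hΦ : 0 < Φ) (hc : 0 < c) (hL : 0 ≤ L) (hL1 : L ≤ 1)
    (hd : 0 ≤ d) (hsmall : (d / c) * Φ ≤ 1 / 3) :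
    (1 / pmax) * ((2 : ℝ) ^ ((L + d / c) * Φ) - 1)
        - (1 / pmax) * ((2 : ℝ) ^ (L * Φ) - 1)
      ≤ (d / c) * Φ * (2 : ℝ) ^ ((1 : ℝ) / 3)
          * ((1 / pmax) * ((2 : ℝ) ^ (L * Φ) - 1) + 1 / pmax) := by
  set a := d / c * Φ with ha_def
  have ha : 0 ≤ a := mul_nonneg (div_nonneg hd hc.le) hΦ.le
  set t := a * Real.log 2 with ht_def
  have hlog2 : Real.log 2 ≤ 1 := by
    have := Real.log_two_lt_d9
    linarith
  have hlogpos : 0 < Real.log 2 := Real.log_pos one_lt_two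
  have hexp : Real.exp t = (2:ℝ) ^ a := by
    rw [Real.rpow_def_of_pos two_pos, mul_comm]
  have key : (2:ℝ) ^ a - 1 ≤ a * (2:ℝ) ^ ((1:ℝ)/3) := by
    have h1 : (2:ℝ) ^ a - 1 ≤ t * (2:ℝ) ^ a := by
      have h := Real.add_one_le_exp (-t)
      have hinv : Real.exp t * Real.exp (-t) = 1 := by
        rw [← Real.exp_add]; simp
      nlinarith [Real.exp_pos t, Real.exp_pos (-t)]
    have h2 : (2:ℝ) ^ a ≤ (2:ℝ) ^ ((1:ℝ)/3) :=
      Real.rpow_le_rpow_left_iff one_lt_two |>.mpr hsmall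
    have h3 : t * (2:ℝ) ^ a ≤ a * (2:ℝ) ^ ((1:ℝ)/3) := by
      have hrpos : (0:ℝ) < (2:ℝ) ^ a := Real.rpow_pos_of_pos two_pos a
      have ht1 : t ≤ a := by nlinarith
      nlinarith [mul_nonneg ha hrpos.le]
    linarith
  have hsplit : (2:ℝ) ^ ((L + d / c) * Φ) = (2:ℝ) ^ (L * Φ) * (2:ℝ) ^ a := by
    rw [← Real.rpow_add two_pos, ha_def]; ring_nf
  have hpos : (0:ℝ) < (2:ℝ) ^ (L * Φ) := Real.rpow_pos_of_pos two_pos _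
  have hppos : (0:ℝ) < 1 / pmax := by positivity
  rw [hsplit]
  have hmul : (1 / pmax) * (2:ℝ) ^ (L * Φ) * ((2:ℝ) ^ a - 1)
      ≤ (1 / pmax) * (2:ℝ) ^ (L * Φ) * (a * (2:ℝ) ^ ((1:ℝ)/3)) :=
    mul_le_mul_of_nonneg_left key (by positivity)
  nlinarith [hmul]
end

section
/- Expand is a left inverse of fold: for any valid realization p of request r with a fixed segmentation, fold(expand(p)) = p. -/
/-- `i`-th vertex of a path given as a list. -/
def nth {V : Type*} [Inhabited V] (p : List V) (i : ℕ) : V := p.getD i default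

/-- A realization of a request together with its segmentation: the physical path
`path`, the PR-path `x 0, ..., x len`, and the cut points `cuts`. -/
structure Seg (V X : Type*) where
  path : List V
  x : ℕ → X
  len : ℕ
  cuts : ℕ → ℕ

/-- `r` is a valid realization of the request with the given segmentation: each
segment `i` realizes the PR-edge `(x (i-1), x i)` (all its edges lie in the
corresponding `UE`-set), consecutive segment endpoints lie in the `UV`-sets of
the shared PR-vertices. -/
def ValidSegReal {V X : Type*} [Inhabited V] (G : PRG V X) (r : Seg V X) : Prop :=
  r.x 0 = G.s ∧ r.x r.len = G.t ∧
  (∀ i, i < r.len → (r.x i, r.x (i + 1)) ∈ G.E) ∧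
  (∀ i j, i ≤ j → j ≤ r.len → r.cuts i ≤ r.cuts j) ∧
  r.cuts 0 = 0 ∧ r.cuts r.len + 1 = r.path.length ∧
  (∀ i, i ≤ r.len → nth r.path (r.cuts i) ∈ G.UV (r.x i)) ∧
  (∀ i, 0 < i → i ≤ r.len → ∀ j, r.cuts (i - 1) < j → j ≤ r.cuts i →
    (nth r.path (j - 1), nth r.path j) ∈ G.UE (r.x (i - 1), r.x i))

/-- The vertices `(p a, ..., p b)` of the `i`-th segment. -/
def segVerts {V : Type*} [Inhabited V] (p : List V) (a b : ℕ) : List V :=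
  (List.range (b + 1 - a)).map (fun j => nth p (a + j))

/-- `expand`: each edge `(v,v')` of the `i`-th segment is mapped to the routing
edge `((v, e_i), (v', e_i))` and each segment endpoint `v` between segments `i`
and `i+1` to the processing edge `((v, e_i), (v, e_{i+1}))`; concretely, segment
`i` contributes its vertices labeled with the PR-edge `e_i = (x (i-1), x i)`. -/
def expand {V X : Type*} [Inhabited V] (r : Seg V X) : List (PV V X) :=
  ((List.range r.len).map (fun i =>
    (segVerts r.path (r.cuts i) (r.cuts (i + 1))).map
      (fun v => (v, (r.x i, r.x (i + 1)))))).flatten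


section AuxFoldExpand

open List

variable {V : Type*} [Inhabited V] [DecidableEq V]

lemma segVerts_self (p : List V) (a : ℕ) : segVerts p a a = [nth p a] := by
  have h : a + 1 - a = 1 := by omega
  simp [segVerts, h, List.range_succ]

lemma segVerts_length (p : List V) (a b : ℕ) : (segVerts p a b).length = b + 1 - a := by
  simp [segVerts]

lemma segVerts_cons (p : List V) {a b : ℕ} (h : a ≤ b) :
    segVerts p a b = nth p a :: segVerts p (a + 1) b := by
  unfold segVerts
  have h1 : b + 1 - a = (b - a) + 1 := by omega
  have h2 : b + 1 - (a + 1) = b - a := by omega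
  rw [h1, h2, List.range_succ_eq_map, List.map_cons, List.map_map]
  simp only [Nat.add_zero]
  refine congrArg _ (List.map_congr_left fun j _ => ?_)
  simp only [Function.comp_apply, Nat.succ_eq_add_one]
  congr 1
  omega

lemma segVerts_ne_nil (p : List V) {a b : ℕ} (h : a ≤ b) : segVerts p a b ≠ [] := by
  intro hc
  have := segVerts_length p a b
  rw [hc] at this
  simp at this
  omega

lemma segVerts_nil (p : List V) {a b : ℕ} (h : b < a) : segVerts p a b = [] := by
  have h1 : b + 1 - a = 0 := by omega
  simp [segVerts, h1]

lemma dropLast_segVerts_append (p : List V) :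
    ∀ (k a b c : ℕ), b = a + k → b ≤ c →
      (segVerts p a b).dropLast ++ segVerts p b c = segVerts p a c := by
  intro k
  induction k with
  | zero =>
    intro a b c hb hbc
    have : b = a := by omega
    subst this
    simp [segVerts_self]
  | succ k ih =>
    intro a b c hb hbc
    have hab : a ≤ b := by omega
    have hac : a ≤ c := by omega
    rw [segVerts_cons p hab, segVerts_cons p hac,
      List.dropLast_cons_of_ne_nil (segVerts_ne_nil p (by omega : a + 1 ≤ b)),
      List.cons_append]
    congr 1
    exact ih (a + 1) b c (by omega) hbc

lemma destutter'_seg (p : List V)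
    (hstep : ∀ j, j + 1 < p.length → nth p j ≠ nth p (j + 1)) :
    ∀ (k a b : ℕ), b = a + k → b + 1 ≤ p.length → ∀ (L : List V),
      List.destutter' (· ≠ ·) (nth p a) (segVerts p (a + 1) b ++ L)
        = (segVerts p a b).dropLast ++ List.destutter' (· ≠ ·) (nth p b) L := by
  intro k
  induction k with
  | zero =>
    intro a b hb hlen L
    have : b = a := by omega
    subst this
    rw [segVerts_nil p (by omega : b < b + 1), List.nil_append]
    simp [segVerts_self]
  | succ k ih =>
    intro a b hb hlen L
    have h1 : a + 1 ≤ b := by omega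
    rw [segVerts_cons p h1, List.cons_append, List.destutter'_cons,
      if_pos (hstep a (by omega)), ih (a + 1) b (by omega) hlen L,
      segVerts_cons p (by omega : a ≤ b),
      List.dropLast_cons_of_ne_nil (segVerts_ne_nil p h1), List.cons_append]

lemma destutter'_flatten (p : List V) (g : ℕ → ℕ) (len : ℕ)
    (hmono : ∀ i j, i ≤ j → j ≤ len → g i ≤ g j)
    (hlast : g len + 1 = p.length)
    (hstep : ∀ j, j + 1 < p.length → nth p j ≠ nth p (j + 1)) :
    ∀ (m i : ℕ), i + m = len →
      List.destutter' (· ≠ ·) (nth p (g i))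
        (((List.range' i m).map (fun k => segVerts p (g k) (g (k + 1)))).flatten)
        = segVerts p (g i) (g len) := by
  intro m
  induction m with
  | zero =>
    intro i hi
    have : i = len := by omega
    subst this
    simp [List.destutter'_nil, segVerts_self]
  | succ m ih =>
    intro i hi
    have hi1 : g i ≤ g (i + 1) := hmono i (i + 1) (by omega) (by omega)
    have hb : g (i + 1) ≤ g len := hmono (i + 1) len (by omega) (le_refl _)
    rw [List.range'_succ, List.map_cons, List.flatten_cons,
      segVerts_cons p hi1, List.cons_append, List.destutter'_cons,
      if_neg (by simp),
      destutter'_seg p hstep (g (i + 1) - g i) (g i) (g (i + 1)) (by omega) (by omega),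
      ih (i + 1) (by omega)]
    exact dropLast_segVerts_append p (g (i + 1) - g i) _ _ _ (by omega) hb

end AuxFoldExpand

/-- `expand` is a left inverse of `fold`: for any valid realization `r` of the
request (with a fixed segmentation, nontrivial PR-path, and no self-loop steps),
folding `expand r` recovers the physical path of `r`. -/
theorem fold_expand_eq {V X : Type*} [DecidableEq V] [Inhabited V]
    (G : PRG V X) (r : Seg V X) (hr : ValidSegReal G r)
    (hlen : 0 < r.len) (hnl : r.path.Chain' (· ≠ ·)) :
    fold (expand r) = r.path := by
  obtain ⟨-, -, -, hmono, hc0, hclen, -, -⟩ := hr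
  have hstep : ∀ j, j + 1 < r.path.length → nth r.path j ≠ nth r.path (j + 1) := by
    intro j hj
    have h := List.isChain_iff_getElem.mp hnl j (by omega)
    unfold nth
    rw [List.getD_eq_getElem _ _ (show j < r.path.length by omega),
      List.getD_eq_getElem _ _ hj]
    simpa using h
  have hM : (expand r).map Prod.fst
      = ((List.range' 0 r.len).map
          (fun k => segVerts r.path (r.cuts k) (r.cuts (k + 1)))).flatten := by
    rw [expand, List.map_flatten, List.map_map, List.range_eq_range']
    refine congrArg _ (List.map_congr_left fun k _ => ?_)
    simp [Function.comp_def]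
  obtain ⟨n, hn⟩ : ∃ n, r.len = n + 1 := ⟨r.len - 1, by omega⟩
  have hg01 : r.cuts 0 ≤ r.cuts 1 := hmono 0 1 (by omega) (by omega)
  have hMform : ((List.range' 0 r.len).map
        (fun k => segVerts r.path (r.cuts k) (r.cuts (k + 1)))).flatten
      = nth r.path (r.cuts 0) ::
        (segVerts r.path (r.cuts 0 + 1) (r.cuts 1) ++
          ((List.range' 1 n).map
            (fun k => segVerts r.path (r.cuts k) (r.cuts (k + 1)))).flatten) := by
    rw [hn, List.range'_succ, List.map_cons, List.flatten_cons, segVerts_cons r.path hg01,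
      List.cons_append]
  have hB := destutter'_flatten r.path r.cuts r.len hmono hclen hstep r.len 0 (by omega)
  have hfin : segVerts r.path (r.cuts 0) (r.cuts r.len) = r.path := by
    apply List.ext_getElem
    · rw [segVerts_length]; omega
    · intro i h1 h2
      simp only [segVerts, List.getElem_map, List.getElem_range, nth, hc0, Nat.zero_add]
      exact List.getD_eq_getElem r.path default h2
  calc fold (expand r)
      = (((List.range' 0 r.len).map
          (fun k => segVerts r.path (r.cuts k) (r.cuts (k + 1)))).flatten).destutter (· ≠ ·) := by
        rw [fold, hM]
    _ = List.destutter' (· ≠ ·) (nth r.path (r.cuts 0))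
          (((List.range' 0 r.len).map
            (fun k => segVerts r.path (r.cuts k) (r.cuts (k + 1)))).flatten) := by
        rw [hMform, List.destutter_cons', List.destutter'_cons, if_neg (by simp)]
    _ = segVerts r.path (r.cuts 0) (r.cuts r.len) := hB
    _ = r.path := hfin
end
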